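/- arXiv:2507.12848 — 7 statements merged into one kernel-verified Lean document; each statement's English description precedes it below -/
import Mathlib

section
/- Fix parameters ρ > η > 1, φ ∈ (0,1), θ ∈ (0,1), and s ∈ (0,1). With λ(s) = (η−1)·s/((ε(s)−1)·(1−(1−s)^{(η−1)/(ρ−1)})) > 0 and ω = ((φ/(1−φ))·λ(s))/(1+(φ/(1−φ))·λ(s)) ∈ (0,1), the map x ↦ μ(s,x;φ,θ) = (1−ω)·μ_olig(s) + ω·θ·(1−(1−x)^{1/θ})/x is strictly decreasing on (0,1). -/
lemma markdown_strict_anti (θ : ℝ) (hθ0 : 0 < θ) (hθ1 : θ < 1)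
    {x y : ℝ} (hx : x ∈ Set.Ioo (0:ℝ) 1) (hy : y ∈ Set.Ioo (0:ℝ) 1) (hxy : x < y) :
    θ * (1 - (1 - y) ^ (1 / θ)) / y < θ * (1 - (1 - x) ^ (1 / θ)) / x := by
  obtain ⟨hx0, hx1⟩ := hx
  obtain ⟨hy0, hy1⟩ := hy
  set a : ℝ := 1 / θ with ha_def
  have ha : 1 < a := by rw [ha_def, lt_div_iff₀ hθ0]; linarith
  have hne : (1 : ℝ) ≠ 1 - y := by linarith
  have hw1 : 0 < 1 - x / y := by
    have : x / y < 1 := (div_lt_one hy0).mpr hxy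
    linarith
  have hw2 : 0 < x / y := div_pos hx0 hy0
  have hconv := (strictConvexOn_rpow ha).2 (Set.mem_Ici.mpr zero_le_one)
    (Set.mem_Ici.mpr (by linarith : (0:ℝ) ≤ 1 - y)) hne hw1 hw2 (by ring)
  simp only [smul_eq_mul, Real.one_rpow] at hconv
  have hcomb : (1 - x / y) * 1 + x / y * (1 - y) = 1 - x := by field_simp; ring
  rw [hcomb] at hconv
  -- hconv : (1 - x)^a < (1 - x/y) * 1 + x/y * (1-y)^a
  have key : y * (1 - x) ^ a < (y - x) + x * (1 - y) ^ a := by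
    have h2 := mul_lt_mul_of_pos_left hconv hy0
    calc y * (1 - x) ^ a < y * ((1 - x / y) * 1 + x / y * (1 - y) ^ a) := h2
      _ = (y - x) + x * (1 - y) ^ a := by field_simp
  rw [div_lt_div_iff₀ hy0 hx0]
  nlinarith [key]

/-- Forward direction of Proposition 2, part 2. -/
theorem stmt3 (ρ η φ θ s : ℝ) (hη : 1 < η) (hρη : η < ρ)
    (hφ : φ ∈ Set.Ioo (0:ℝ) 1) (hθ : θ ∈ Set.Ioo (0:ℝ) 1)
    (hs : s ∈ Set.Ioo (0:ℝ) 1) :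
    let ε : ℝ := (1 - s) * ρ + s * η
    let μolig : ℝ := ε / (ε - 1)
    let lam : ℝ := (η - 1) * s / ((ε - 1) * (1 - (1 - s) ^ ((η - 1) / (ρ - 1))))
    let ω : ℝ := ((φ / (1 - φ)) * lam) / (1 + (φ / (1 - φ)) * lam)
    0 < lam ∧ ω ∈ Set.Ioo (0:ℝ) 1 ∧
      StrictAntiOn
        (fun x : ℝ => (1 - ω) * μolig + ω * (θ * (1 - (1 - x) ^ (1 / θ)) / x))
        (Set.Ioo 0 1) := by
  intro ε μolig lam ω
  obtain ⟨hφ0, hφ1⟩ := hφ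
  obtain ⟨hθ0, hθ1⟩ := hθ
  obtain ⟨hs0, hs1⟩ := hs
  have hε1 : 1 < ε := by
    have h1 : (1 - s) * 1 < (1 - s) * ρ := by nlinarith
    have h2 : s * 1 < s * η := by nlinarith
    show (1:ℝ) < (1 - s) * ρ + s * η
    nlinarith
  have hpow : (1 - s) ^ ((η - 1) / (ρ - 1)) < 1 :=
    Real.rpow_lt_one (by linarith) (by linarith)
      (div_pos (by linarith) (by linarith))
  have hlam : 0 < lam := by
    apply div_pos (by nlinarith)
    exact mul_pos (by linarith) (by linarith)
  have ht : 0 < (φ / (1 - φ)) * lam :=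
    mul_pos (div_pos hφ0 (by linarith)) hlam
  have hω0 : 0 < ω := div_pos ht (by linarith)
  have hω1 : ω < 1 := (div_lt_one (by linarith)).mpr (by linarith)
  refine ⟨hlam, ⟨hω0, hω1⟩, ?_⟩
  intro x hx y hy hxy
  have := markdown_strict_anti θ hθ0 hθ1 hx hy hxy
  have h2 := mul_lt_mul_of_pos_left this hω0
  simpa using add_lt_add_left h2 ((1 - ω) * μolig)
end

section
/- For every θ ∈ (0,1) and every x ∈ (0,1): x·(1−x)^{(1−θ)/θ} < θ·(1−(1−x)^{1/θ}). Moreover, for θ = 1 and every x ∈ (0,1): x·(1−x)^{(1−θ)/θ} = θ·(1−(1−x)^{1/θ}) (both sides equal x). -/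
/-!
With `y = 1 - x` and `p = 1 / θ > 1`, the inequality becomes `y ^ p + p (1 - y) y ^ (p - 1) < 1`,
which is Bernoulli's inequality `1 + p (y⁻¹ - 1) < y⁻¹ ^ p` multiplied by `y ^ p`.
-/

open Real

lemma rpow_add_mul_one_sub_mul_rpow_sub_one_lt_one {p y : ℝ} (hp : 1 < p) (hy : 0 < y)
    (hy1 : y ≠ 1) : y ^ p + p * (1 - y) * y ^ (p - 1) < 1 := by
  have hyp : 0 < y ^ p := rpow_pos_of_pos hy p
  have bernoulli : 1 + p * (y⁻¹ - 1) < (y ^ p)⁻¹ := by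
    have h := one_add_mul_self_lt_rpow_one_add (s := y⁻¹ - 1)
      (by linarith [inv_pos.mpr hy]) (sub_ne_zero.mpr (inv_ne_one.mpr hy1)) hp
    rwa [add_sub_cancel, inv_rpow hy.le] at h
  have hsub : y ^ (p - 1) = y ^ p * y⁻¹ := by
    rw [rpow_sub_one hy.ne', div_eq_mul_inv]
  calc y ^ p + p * (1 - y) * y ^ (p - 1) = (1 + p * (y⁻¹ - 1)) * y ^ p := by
        rw [hsub]; field_simp
    _ < (y ^ p)⁻¹ * y ^ p := mul_lt_mul_of_pos_right bernoulli hyp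
    _ = 1 := inv_mul_cancel₀ hyp.ne'

lemma mul_one_sub_rpow_lt_mul_one_sub_one_sub_rpow {θ x : ℝ} (hθ0 : 0 < θ) (hθ1 : θ < 1)
    (hx0 : 0 < x) (hx1 : x < 1) :
    x * (1 - x) ^ ((1 - θ) / θ) < θ * (1 - (1 - x) ^ (1 / θ)) := by
  have hp : 1 < 1 / θ := (one_lt_div hθ0).mpr hθ1
  have key := rpow_add_mul_one_sub_mul_rpow_sub_one_lt_one hp (sub_pos.mpr hx1)
    (by linarith : 1 - x ≠ 1)
  rw [sub_sub_cancel] at key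
  rw [← div_sub_one hθ0.ne']
  calc x * (1 - x) ^ (1 / θ - 1) = θ * (1 / θ * x * (1 - x) ^ (1 / θ - 1)) := by field_simp
    _ < θ * (1 - (1 - x) ^ (1 / θ)) := mul_lt_mul_of_pos_left (by linarith) hθ0

/-- Key analytic inequality behind oligopsony results: for `θ ∈ (0,1)` and
`x ∈ (0,1)`, `x·(1−x)^{(1−θ)/θ} < θ·(1−(1−x)^{1/θ})`, with equality (both
sides equal `x`) when `θ = 1`. -/
theorem stmt4 :
    (∀ θ ∈ Set.Ioo (0:ℝ) 1, ∀ x ∈ Set.Ioo (0:ℝ) 1,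
      x * (1 - x) ^ ((1 - θ) / θ) < θ * (1 - (1 - x) ^ (1 / θ))) ∧
    (∀ x ∈ Set.Ioo (0:ℝ) 1,
      x * (1 - x) ^ ((1 - (1:ℝ)) / 1) = 1 * (1 - (1 - x) ^ (1 / (1:ℝ)))) :=
  ⟨fun _ hθ _ hx => mul_one_sub_rpow_lt_mul_one_sub_one_sub_rpow hθ.1 hθ.2 hx.1 hx.2,
    fun _ _ => by norm_num⟩
end

section
/- For every θ ∈ (0,1), the function x ↦ θ·(1−(1−x)^{1/θ})/x is strictly decreasing on the interval (0,1). -/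
/-!
With `p = 1/θ > 1`, the map `g x = 1 - (1 - x)^p` is strictly concave on `(-∞, 1]` (a reflection
of the strictly convex `t ↦ t^p` on `[0, ∞)`) and vanishes at `0`. The markdown is `θ · g x / x`,
`θ` times the slope of the chord of `g` from `0` to `x`, and chord slopes of a strictly concave
function from a fixed point are strictly decreasing.
-/

open Set

theorem StrictConvexOn.comp_const_sub {𝕜 E β : Type*} [Semiring 𝕜] [PartialOrder 𝕜]
    [AddCommGroup E] [Module 𝕜 E] [AddCommMonoid β] [PartialOrder β] [SMul 𝕜 β]
    {s : Set E} {f : E → β} (hf : StrictConvexOn 𝕜 s f) (c : E) :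
    StrictConvexOn 𝕜 ((c - ·) ⁻¹' s) (fun x => f (c - x)) := by
  have hreflect : ∀ x y : E, ∀ a b : 𝕜, a + b = 1 →
      c - (a • x + b • y) = a • (c - x) + b • (c - y) := by
    intro x y a b hab
    rw [smul_sub, smul_sub, sub_add_sub_comm, ← add_smul, hab, one_smul]
  refine ⟨?_, fun x hx y hy hxy a b ha hb hab => ?_⟩
  · intro x hx y hy a b ha hb hab
    simpa only [mem_preimage, hreflect x y a b hab] using hf.1 hx hy ha hb hab
  · simpa only [hreflect x y a b hab] using hf.2 hx hy (sub_right_injective.ne hxy) ha hb hab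

theorem strictConcaveOn_one_sub_one_sub_rpow {p : ℝ} (hp : 1 < p) :
    StrictConcaveOn ℝ (Iic 1) (fun x : ℝ => 1 - (1 - x) ^ p) := by
  have hconvex := (strictConvexOn_rpow hp).comp_const_sub 1
  rw [show ((1 : ℝ) - ·) ⁻¹' Ici 0 = Iic 1 by ext; simp] at hconvex
  exact (concaveOn_const 1 (convex_Iic 1)).sub_strictConvexOn hconvex

theorem StrictConcaveOn.strictAntiOn_div_self {𝕜 : Type*} [Field 𝕜] [LinearOrder 𝕜]
    [IsStrictOrderedRing 𝕜] {s : Set 𝕜} {f : 𝕜 → 𝕜} (hf : StrictConcaveOn 𝕜 s f)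
    (h0 : (0 : 𝕜) ∈ s) (hf0 : f 0 = 0) :
    StrictAntiOn (fun x => f x / x) (s \ {0}) := by
  intro x hx y hy hxy
  simpa only [hf0, sub_zero] using hf.secant_strict_mono h0 hx.1 hy.1 hx.2 hy.2 hxy

/-- For `θ ∈ (0,1)` the oligopsony markdown `x ↦ θ·(1−(1−x)^{1/θ})/x`
is strictly decreasing on `(0,1)`. -/
theorem stmt5 (θ : ℝ) (hθ : θ ∈ Set.Ioo (0:ℝ) 1) :
    StrictAntiOn (fun x : ℝ => θ * (1 - (1 - x) ^ (1 / θ)) / x) (Set.Ioo 0 1) := by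
  obtain ⟨hθ0, hθ1⟩ := hθ
  have hchord :=
    (strictConcaveOn_one_sub_one_sub_rpow (one_lt_one_div hθ0 hθ1)).strictAntiOn_div_self
      (by simp) (by simp)
  intro x hx y hy hxy
  simp only [mul_div_assoc]
  exact mul_lt_mul_of_pos_left
    (hchord ⟨hx.2.le, hx.1.ne'⟩ ⟨hy.2.le, hy.1.ne'⟩ hxy) hθ0
end

section
/- For every θ ∈ (0,1] and every x ∈ (0,1]: θ ≤ θ·(1−(1−x)^{1/θ})/x ≤ 1. Moreover the upper bound is attained for all x when θ = 1, and the lower bound is attained at x = 1. -/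
/-! With `p = 1/θ ≥ 1` and `y = 1 - x ∈ [0, 1)`, both bounds are facts about `y ↦ y ^ p` on `[0, 1]`:
it lies below the identity, which gives the lower bound, and above its tangent line `1 - p (1 - y)` at
`y = 1` by Bernoulli's inequality, which gives the upper bound. -/

open Real

lemma one_le_one_div_of_le_one {θ : ℝ} (hθ0 : 0 < θ) (hθ1 : θ ≤ 1) : 1 ≤ 1 / θ :=
  (one_le_div hθ0).mpr hθ1

lemma mul_le_mul_one_sub_one_sub_rpow {θ x : ℝ} (hθ0 : 0 < θ) (hθ1 : θ ≤ 1) (hx0 : 0 ≤ x)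
    (hx1 : x ≤ 1) : θ * x ≤ θ * (1 - (1 - x) ^ (1 / θ)) := by
  have hpow : (1 - x) ^ (1 / θ) ≤ 1 - x :=
    rpow_le_self_of_le_one (by linarith) (by linarith) (one_le_one_div_of_le_one hθ0 hθ1)
  gcongr
  linarith

lemma mul_one_sub_one_sub_rpow_le {θ x : ℝ} (hθ0 : 0 < θ) (hθ1 : θ ≤ 1) (hx1 : x ≤ 1) :
    θ * (1 - (1 - x) ^ (1 / θ)) ≤ x := by
  have bernoulli : 1 + 1 / θ * -x ≤ (1 + -x) ^ (1 / θ) :=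
    one_add_mul_self_le_rpow_one_add (by linarith) (one_le_one_div_of_le_one hθ0 hθ1)
  rw [← sub_eq_add_neg] at bernoulli
  calc θ * (1 - (1 - x) ^ (1 / θ)) ≤ θ * (1 - (1 + 1 / θ * -x)) := by gcongr
    _ = x := by field_simp; ring

/-- Bounds on the oligopsony markdown: for `θ ∈ (0,1]` and `x ∈ (0,1]`,
`θ ≤ θ·(1−(1−x)^{1/θ})/x ≤ 1`; the upper bound is attained for all `x` when
`θ = 1`, and the lower bound is attained at `x = 1`. -/
theorem stmt6 (θ : ℝ) (hθ : θ ∈ Set.Ioc (0:ℝ) 1) :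
    (∀ x ∈ Set.Ioc (0:ℝ) 1,
      θ ≤ θ * (1 - (1 - x) ^ (1 / θ)) / x ∧ θ * (1 - (1 - x) ^ (1 / θ)) / x ≤ 1) ∧
    (θ = 1 → ∀ x ∈ Set.Ioc (0:ℝ) 1, θ * (1 - (1 - x) ^ (1 / θ)) / x = 1) ∧
    θ * (1 - (1 - (1:ℝ)) ^ (1 / θ)) / 1 = θ := by
  obtain ⟨hθ0, hθ1⟩ := hθ
  refine ⟨fun x ⟨hx0, hx1⟩ => ⟨?_, ?_⟩, ?_, ?_⟩
  · rw [le_div_iff₀ hx0]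
    exact mul_le_mul_one_sub_one_sub_rpow hθ0 hθ1 hx0.le hx1
  · rw [div_le_one hx0]
    exact mul_one_sub_one_sub_rpow_le hθ0 hθ1 hx1
  · rintro rfl x ⟨hx0, -⟩
    rw [div_one, rpow_one]
    field_simp
    ring
  · rw [sub_self, zero_rpow (one_div_ne_zero hθ0.ne'), sub_zero, mul_one, div_one]
end

section
/- Let T₀ > 0 and let p : ℝ → ℝ, μ : ℝ → ℝ, c : ℝ → ℝ be functions with p(T₀) > 0, μ(p(T₀)) > 0, c(p(T₀)) > 0, such that p is differentiable at T₀, μ and c are differentiable at p₀ := p(T₀), and p(T) = μ(p(T))·c(p(T))·T for all T in a neighborhood of T₀. Define Γ = −μ′(p₀)·p₀/μ(p₀) and Λ = −c′(p₀)·p₀/c(p₀). Then the pass-through elasticity E := T₀·p′(T₀)/p(T₀) satisfies E·(1 + Γ + Λ) = 1; in particular, if 1 + Γ + Λ ≠ 0 then E = 1/(1 + Γ + Λ). -/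
open Filter Topology

/-- Proposition 3 (tariff pass-through).  If the bilateral price satisfies
`p(T) = μ(p(T))·c(p(T))·T` near `T₀`, then the pass-through elasticity
`E = T₀·p′(T₀)/p(T₀)` satisfies `E·(1+Γ+Λ) = 1`, where `Γ` and `Λ` are the
markup and cost elasticities with respect to the bilateral price. -/
theorem stmt9 (T₀ : ℝ) (p μ c : ℝ → ℝ) (hT₀ : 0 < T₀)
    (hp : 0 < p T₀) (hμ : 0 < μ (p T₀)) (hc : 0 < c (p T₀))
    (hdp : DifferentiableAt ℝ p T₀)
    (hdμ : DifferentiableAt ℝ μ (p T₀))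
    (hdc : DifferentiableAt ℝ c (p T₀))
    (heq : ∀ᶠ T in 𝓝 T₀, p T = μ (p T) * c (p T) * T) :
    let p₀ : ℝ := p T₀
    let Γ : ℝ := -(deriv μ p₀ * p₀ / μ p₀)
    let Λ : ℝ := -(deriv c p₀ * p₀ / c p₀)
    let E : ℝ := T₀ * deriv p T₀ / p T₀
    E * (1 + Γ + Λ) = 1 ∧ (1 + Γ + Λ ≠ 0 → E = 1 / (1 + Γ + Λ)) := by
  intro p₀ Γ Λ E
  set a := deriv μ p₀ with ha
  set b := deriv c p₀ with hb
  set d := deriv p T₀ with hd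
  set M := μ p₀ with hM
  set C := c p₀ with hC
  have key1 : p₀ = M * C * T₀ := heq.self_of_nhds
  -- derivative of RHS
  have hμp : HasDerivAt (fun T => μ (p T)) (a * d) T₀ :=
    (hdμ.hasDerivAt).comp T₀ hdp.hasDerivAt
  have hcp : HasDerivAt (fun T => c (p T)) (b * d) T₀ :=
    (hdc.hasDerivAt).comp T₀ hdp.hasDerivAt
  have hrhs : HasDerivAt (fun T => μ (p T) * c (p T) * T)
      ((a * d * C + M * (b * d)) * T₀ + M * C * 1) T₀ :=
    (hμp.mul hcp).mul (hasDerivAt_id T₀)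
  have hp' : HasDerivAt p ((a * d * C + M * (b * d)) * T₀ + M * C * 1) T₀ :=
    hrhs.congr_of_eventuallyEq heq
  have key2 : d = (a * d * C + M * (b * d)) * T₀ + M * C * 1 := hp'.deriv
  have hp0 : p₀ ≠ 0 := ne_of_gt hp
  have hM0 : M ≠ 0 := ne_of_gt hμ
  have hC0 : C ≠ 0 := ne_of_gt hc
  have hT0 : T₀ ≠ 0 := ne_of_gt hT₀
  have main : E * (1 + Γ + Λ) = 1 := by
    show T₀ * d / p₀ * (1 + -(a * p₀ / M) + -(b * p₀ / C)) = 1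
    field_simp
    linear_combination (M*C*T₀) * key2 - (T₀*d*(a*C+b*M) + M*C) * key1
  exact ⟨main, fun h => by rw [eq_div_iff h]; exact main⟩
end

section
/- Fix parameters ρ > η > 1. For s ∈ [0,1] let ε(s) = (1−s)·ρ + s·η and define the oligopoly markup elasticity Γ_olig(s) = (1/(ε(s)−1))·((ρ−ε(s))/ε(s))·(ρ−1)·(1−s). Then Γ_olig(0) = 0, Γ_olig(1) = 0, and Γ_olig(s) > 0 for all s ∈ (0,1). -/
/-- The oligopoly markup elasticity
`Γ_olig(s) = (1/(ε(s)−1))·((ρ−ε(s))/ε(s))·(ρ−1)·(1−s)`, with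
`ε(s) = (1−s)ρ + sη` and `ρ > η > 1`, vanishes at `s = 0` and `s = 1` and is
strictly positive on `(0,1)`. -/
theorem stmt11 (ρ η : ℝ) (hη : 1 < η) (hρη : η < ρ) :
    let ε : ℝ → ℝ := fun s => (1 - s) * ρ + s * η
    let Γ : ℝ → ℝ := fun s => (1 / (ε s - 1)) * ((ρ - ε s) / ε s) * (ρ - 1) * (1 - s)
    Γ 0 = 0 ∧ Γ 1 = 0 ∧ ∀ s ∈ Set.Ioo (0:ℝ) 1, 0 < Γ s := by
  intro ε Γ
  refine ⟨by simp [Γ, ε], by simp [Γ, ε], ?_⟩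
  rintro s ⟨hs0, hs1⟩
  have hεlt : ε s < ρ := by
    have : ε s = ρ - s * (ρ - η) := by simp [ε]; ring
    rw [this]; nlinarith
  have hε1 : 1 < ε s := by
    have : ε s = ρ - s * (ρ - η) := by simp [ε]; ring
    nlinarith
  have h1 : 0 < 1 / (ε s - 1) := one_div_pos.mpr (by linarith)
  have h2 : 0 < (ρ - ε s) / ε s := by
    apply div_pos <;> linarith
  have h3 : (0:ℝ) < ρ - 1 := by linarith
  have h4 : (0:ℝ) < 1 - s := by linarith
  exact mul_pos (mul_pos (mul_pos h1 h2) h3) h4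
end

section
/- Let A > 0, B > 0, C > 0 and φ* ∈ (0,1) be real numbers such that A + (φ*)²·B − 2·φ*·C > 0 and φ*·B > C. Define R̃(φ) = (φ−φ*)²·A + ((1−φ)·φ*)²·B + 2·(φ−φ*)·(1−φ)·φ*·C. Then R̃ is a quadratic in φ with positive leading coefficient A + (φ*)²·B − 2·φ*·C, its unique minimizer is φ̂ = φ*·(A + φ*·B − C·(1+φ*))/(A + (φ*)²·B − 2·φ*·C), and φ̂ > φ*. -/
set_option maxHeartbeats 800000 in
/-- Misspecified estimation bias (Appendix D.3.1): the restricted least-squares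
objective `R̃(φ) = (φ−φ*)²·A + ((1−φ)·φ*)²·B + 2·(φ−φ*)·(1−φ)·φ*·C` is a
quadratic in `φ` with positive leading coefficient `A + (φ*)²·B − 2·φ*·C`, its
unique minimizer is `φ̂ = φ*·(A + φ*·B − C·(1+φ*))/(A + (φ*)²·B − 2·φ*·C)`,
and `φ̂ > φ*`. -/
theorem stmt19 (A B C φs : ℝ) (hA : 0 < A) (hB : 0 < B) (hC : 0 < C)
    (hφ : φs ∈ Set.Ioo (0:ℝ) 1)
    (hL : 0 < A + φs ^ 2 * B - 2 * φs * C) (hBC : C < φs * B) :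
    let R : ℝ → ℝ := fun φ =>
      (φ - φs) ^ 2 * A + ((1 - φ) * φs) ^ 2 * B + 2 * (φ - φs) * (1 - φ) * φs * C
    let L : ℝ := A + φs ^ 2 * B - 2 * φs * C
    let φhat : ℝ := φs * (A + φs * B - C * (1 + φs)) / L
    (∃ b c : ℝ, ∀ φ : ℝ, R φ = L * φ ^ 2 + b * φ + c) ∧
    (∀ φ : ℝ, φ ≠ φhat → R φhat < R φ) ∧
    φs < φhat := by
  obtain ⟨h0, h1⟩ := hφ
  intro R L φhat
  have hLpos : 0 < L := hL
  have hL' : L ≠ 0 := ne_of_gt hLpos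
  set b : ℝ := -2 * A * φs - 2 * φs ^ 2 * B + 2 * φs * C * (1 + φs) with hb
  set c : ℝ := A * φs ^ 2 + φs ^ 2 * B - 2 * φs ^ 2 * C with hc
  have hq : ∀ φ : ℝ, R φ = L * φ ^ 2 + b * φ + c := fun φ => by
    show (φ - φs) ^ 2 * A + ((1 - φ) * φs) ^ 2 * B + 2 * (φ - φs) * (1 - φ) * φs * C
      = (A + φs ^ 2 * B - 2 * φs * C) * φ ^ 2 + b * φ + c
    rw [hb, hc]; ring
  have hm : φhat = -b / (2 * L) := by
    show φs * (A + φs * B - C * (1 + φs)) / L = -b / (2 * L)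
    rw [hb]
    field_simp
    ring
  have hsq : ∀ φ : ℝ, R φ - R φhat = L * (φ - φhat) ^ 2 := fun φ => by
    rw [hq φ, hq φhat, hm]
    field_simp
    ring
  refine ⟨⟨b, c, hq⟩, fun φ hne => ?_, ?_⟩
  · have h := hsq φ
    have hpos : 0 < (φ - φhat) ^ 2 := by
      have : φ - φhat ≠ 0 := sub_ne_zero.mpr hne
      positivity
    nlinarith [mul_pos hLpos hpos]
  · show φs < φs * (A + φs * B - C * (1 + φs)) / L
    rw [lt_div_iff₀ hLpos]
    show φs * (A + φs * B - C * (1 + φs)) > φs * (A + φs ^ 2 * B - 2 * φs * C)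
    nlinarith [mul_pos (mul_pos h0 (sub_pos.mpr h1)) (sub_pos.mpr hBC)]
end
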